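/- arXiv:1810.12861 — 3 statements merged into one kernel-verified Lean document; each statement's English description precedes it below -/
import Mathlib

section
/- Let (N, 𝓜) be a matroid of rank K and let A and B be bases. Given any enumeration (a_1, …, a_K) of A, there exists an enumeration (b_1, …, b_K) of B such that for every i ∈ {1, …, K}, A^{i−1} ∪ {b_i} ∈ 𝓜, and moreover whenever b_i ∈ A ∩ B one has b_i = a_i. -/
open Finset

/-!
Call `i` *free* if `a i ∉ B`; at the other positions take `b i = a i`. A free position `i` needs
a `b i ∈ B \ A` with `A^{i-1} ∪ {b i}` independent, distinct for distinct `i`. Augmenting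
`A^{i-1}` from `B` up to size `K` adds `K - i + 1` elements of `B`; those lying in `A` are among
`a i, …, a K` and belong to `B`, so at least as many candidates for position `i` remain as there
are free positions `j ≥ i`. Since the index set is linearly ordered, this tail bound at the least
index of any set of free positions is Hall's condition, and Hall's marriage theorem gives the
distinct choices.
-/

/-- The set `{a 1, …, a i}` of the first `i` elements of the sequence `a`. -/
def initSeg {α : Type*} [DecidableEq α] (a : ℕ → α) (i : ℕ) : Finset α :=
  (Finset.Icc 1 i).image a

section Independence

variable {α : Type*} [DecidableEq α] {M : Finset α → Prop}

theorem exists_superset_subset_union_card_le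
    (hM_aug : ∀ S T : Finset α, M S → M T → S.card < T.card → ∃ x ∈ T \ S, M (insert x S))
    {S B : Finset α} (hS : M S) (hB : M B) :
    ∃ C, M C ∧ S ⊆ C ∧ C ⊆ S ∪ B ∧ #B ≤ #C := by
  induction h : #B - #S generalizing S with
  | zero => exact ⟨S, hS, subset_rfl, subset_union_left, by omega⟩
  | succ n ih =>
    obtain ⟨x, hx, hxS⟩ := hM_aug S B hS hB (by omega)
    rw [mem_sdiff] at hx
    obtain ⟨C, hC, hSC, hCSB, hBC⟩ := ih hxS (by rw [card_insert_of_notMem hx.2]; omega)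
    refine ⟨C, hC, (subset_insert x S).trans hSC, hCSB.trans ?_, hBC⟩
    exact union_subset (insert_subset (mem_union_right _ hx.1) subset_union_left)
      subset_union_right

theorem card_sub_card_le_card_inter_sdiff_add_card_filter
    (hM_down : ∀ S T : Finset α, M T → S ⊆ T → M S)
    (hM_aug : ∀ S T : Finset α, M S → M T → S.card < T.card → ∃ x ∈ T \ S, M (insert x S))
    [DecidablePred M] {S B : Finset α} (A : Finset α) (hS : M S) (hB : M B) :
    #B - #S ≤ #(B ∩ (A \ S)) + #{x ∈ B \ A | M (insert x S)} := by
  obtain ⟨C, hC, hSC, hCSB, hBC⟩ := exists_superset_subset_union_card_le hM_aug hS hB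
  have hCS_B : C \ S ⊆ B := fun x hx => by
    rw [mem_sdiff] at hx
    simpa [hx.2] using hCSB hx.1
  calc #B - #S ≤ #(C \ S) := by rw [card_sdiff_of_subset hSC]; omega
    _ = #{x ∈ C \ S | x ∈ A} + #{x ∈ C \ S | x ∉ A} := (card_filter_add_card_filter_not _).symm
    _ ≤ _ := by
      gcongr
      · intro x hx
        simp only [mem_filter, mem_sdiff] at hx
        exact mem_inter.2 ⟨hCS_B (mem_sdiff.2 hx.1), mem_sdiff.2 ⟨hx.2, hx.1.2⟩⟩
      · intro x hx
        simp only [mem_filter, mem_sdiff] at hx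
        exact mem_filter.2 ⟨mem_sdiff.2 ⟨hCS_B (mem_sdiff.2 hx.1), hx.2⟩,
          hM_down _ _ hC (insert_subset hx.1.1 hSC)⟩

end Independence

theorem exists_injOn_mem_of_card_filter_le_le {ι α : Type*} [LinearOrder ι] [DecidableEq α]
    [Nonempty α] (I : Finset ι) (t : ι → Finset α) (h : ∀ i ∈ I, #{j ∈ I | i ≤ j} ≤ #(t i)) :
    ∃ f : ι → α, Set.InjOn f I ∧ ∀ i ∈ I, f i ∈ t i := by
  classical
  suffices ∃ f : I → α, Function.Injective f ∧ ∀ i : I, f i ∈ t i by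
    obtain ⟨f, hf_inj, hf_mem⟩ := this
    refine ⟨fun i => if hi : i ∈ I then f ⟨i, hi⟩ else Classical.arbitrary α, ?_, ?_⟩
    · intro i hi j hj hij
      rw [mem_coe] at hi hj
      exact congrArg Subtype.val (hf_inj (by simpa [hi, hj] using hij))
    · intro i hi
      simpa [hi] using hf_mem ⟨i, hi⟩
  refine (all_card_le_biUnion_card_iff_exists_injective _).mp fun s => ?_
  rcases s.eq_empty_or_nonempty with rfl | hs
  · simp
  obtain ⟨i, his, hmin⟩ := s.exists_min_image Subtype.val hs
  calc #s = #(s.map (Function.Embedding.subtype _)) := (card_map _).symm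
    _ ≤ #{j ∈ I | i.1 ≤ j} := card_le_card fun j hj => by
      obtain ⟨j, hjs, rfl⟩ := mem_map.1 hj
      exact mem_filter.2 ⟨j.2, hmin j hjs⟩
    _ ≤ #(t i) := h i i.2
    _ ≤ #(s.biUnion fun i => t i) := card_le_card (subset_biUnion_of_mem (fun i : I => t i) his)

theorem Finset.injOn_piecewise {ι α : Type*} {s : Finset ι} [∀ j, Decidable (j ∈ s)] {t : Set ι}
    {f g : ι → α} (hf : Set.InjOn f (s ∩ t)) (hg : Set.InjOn g (t \ s))
    (hfg : ∀ i ∈ (s : Set ι) ∩ t, ∀ j ∈ t \ s, f i ≠ g j) :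
    Set.InjOn (s.piecewise f g) t := by
  intro i hi j hj hij
  by_cases his : i ∈ s <;> by_cases hjs : j ∈ s <;>
    simp only [piecewise_eq_of_mem, piecewise_eq_of_notMem, his, hjs, not_false_eq_true] at hij
  · exact hf ⟨his, hi⟩ ⟨hjs, hj⟩ hij
  · exact absurd hij (hfg i ⟨his, hi⟩ j ⟨hj, hjs⟩)
  · exact absurd hij.symm (hfg j ⟨hjs, hj⟩ i ⟨hi, his⟩)
  · exact hg ⟨hi, his⟩ ⟨hj, hjs⟩ hij

section InitSeg

variable {α : Type*} [DecidableEq α] (a : ℕ → α)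

theorem initSeg_subset_image_Icc {i K : ℕ} (h : i ≤ K) : initSeg a i ⊆ (Icc 1 K).image a :=
  image_subset_image (Icc_subset_Icc_right h)

theorem card_initSeg_le (i : ℕ) : #(initSeg a i) ≤ i :=
  card_image_le.trans (by simp)

theorem insert_initSeg_sub_one {i : ℕ} (hi : 1 ≤ i) :
    insert (a i) (initSeg a (i - 1)) = initSeg a i := by
  rw [initSeg, initSeg, ← image_insert]
  congr 1
  ext j
  simp only [mem_insert, mem_Icc]
  omega

theorem image_Icc_sdiff_initSeg_subset (i K : ℕ) :
    (Icc 1 K).image a \ initSeg a i ⊆ (Icc (i + 1) K).image a := by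
  intro x hx
  simp only [initSeg, mem_sdiff, mem_image, mem_Icc, not_exists, not_and] at hx ⊢
  obtain ⟨⟨j, hj, rfl⟩, hx⟩ := hx
  exact ⟨j, ⟨Nat.lt_of_not_le fun hji => hx j ⟨hj.1, hji⟩ rfl, hj.2⟩, rfl⟩

end InitSeg

theorem card_filter_le_le_card_filter_insert_initSeg {α : Type*} [DecidableEq α]
    {M : Finset α → Prop} [DecidablePred M]
    (hM_down : ∀ S T : Finset α, M T → S ⊆ T → M S)
    (hM_aug : ∀ S T : Finset α, M S → M T → S.card < T.card → ∃ x ∈ T \ S, M (insert x S))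
    {K : ℕ} {a : ℕ → α} {B : Finset α} (hA : M ((Icc 1 K).image a)) (hB : M B) (hBK : #B = K)
    {i : ℕ} (hi : i ∈ Icc 1 K) :
    #{j ∈ {j ∈ Icc 1 K | a j ∉ B} | i ≤ j} ≤
      #{x ∈ B \ (Icc 1 K).image a | M (insert x (initSeg a (i - 1)))} := by
  rw [mem_Icc] at hi
  have htail : {j ∈ {j ∈ Icc 1 K | a j ∉ B} | i ≤ j} = {j ∈ Icc i K | a j ∉ B} := by
    ext j
    simp only [mem_filter, mem_Icc]
    grind
  have hS := hM_down _ _ hA (initSeg_subset_image_Icc a (i := i - 1) (by omega))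
  have hexch := card_sub_card_le_card_inter_sdiff_add_card_filter hM_down hM_aug
    ((Icc 1 K).image a) hS hB
  have hinter : #(B ∩ ((Icc 1 K).image a \ initSeg a (i - 1))) ≤ #{j ∈ Icc i K | a j ∈ B} := by
    refine (card_le_card (t := {j ∈ Icc i K | a j ∈ B}.image a) fun x hx => ?_).trans
      card_image_le
    rw [mem_inter] at hx
    have hx' := image_Icc_sdiff_initSeg_subset a (i - 1) K hx.2
    rw [Nat.sub_add_cancel hi.1] at hx'
    obtain ⟨j, hj, rfl⟩ := mem_image.1 hx'
    exact mem_image_of_mem a (mem_filter.2 ⟨hj, hx.1⟩)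
  have hsplit := card_filter_add_card_filter_not (s := Icc i K) (fun j => a j ∈ B)
  have hS_card := card_initSeg_le a (i - 1)
  simp only [Nat.card_Icc] at hsplit
  rw [htail]
  omega

theorem basis_exchange_ordering_general {α : Type*} [DecidableEq α]
    (M : Finset α → Prop)
    (hM_down : ∀ S T : Finset α, M T → S ⊆ T → M S)
    (hM_aug : ∀ S T : Finset α, M S → M T → S.card < T.card → ∃ x ∈ T \ S, M (insert x S))
    (K : ℕ)
    (A B : Finset α) (hA_M : M A)
    (hB_M : M B) (hB_card : B.card = K)
    (a : ℕ → α) (ha_inj : Set.InjOn a (Set.Icc 1 K))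
    (ha_img : (Finset.Icc 1 K).image a = A) :
    ∃ b : ℕ → α, Set.InjOn b (Set.Icc 1 K) ∧ (Finset.Icc 1 K).image b = B ∧
      ∀ i ∈ Finset.Icc 1 K,
        M (insert (b i) (initSeg a (i - 1))) ∧ (b i ∈ A ∩ B → b i = a i) := by
  classical
  have : Nonempty α := ⟨a 0⟩
  subst ha_img
  set I := {j ∈ Icc 1 K | a j ∉ B}
  obtain ⟨f, hf_inj, hf_mem⟩ := exists_injOn_mem_of_card_filter_le_le I
    (fun i => {x ∈ B \ (Icc 1 K).image a | M (insert x (initSeg a (i - 1)))}) fun i hi =>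
      card_filter_le_le_card_filter_insert_initSeg hM_down hM_aug hA_M hB_M hB_card
        (mem_filter.1 hi).1
  simp only [mem_filter, mem_sdiff] at hf_mem
  have hb_inj : Set.InjOn (I.piecewise f a) (Icc 1 K) :=
    injOn_piecewise (hf_inj.mono Set.inter_subset_left)
      (by simpa using ha_inj.mono Set.sdiff_subset)
      fun i hi j hj hij => (hf_mem i hi.1).1.2 (hij ▸ mem_image_of_mem a (mem_coe.1 hj.1))
  have hb_mem : ∀ i ∈ Icc 1 K, I.piecewise f a i ∈ B := by
    intro i hi
    by_cases hiI : i ∈ I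
    · simpa [hiI] using (hf_mem i hiI).1.1
    · rw [piecewise_eq_of_notMem _ _ _ hiI]
      simpa [I, hi] using hiI
  refine ⟨I.piecewise f a, by simpa using hb_inj,
    eq_of_subset_of_card_le (image_subset_iff.2 hb_mem) ?_, fun i hi => ?_⟩
  · rw [card_image_of_injOn hb_inj, Nat.card_Icc, hB_card, Nat.add_sub_cancel]
  by_cases hiI : i ∈ I
  · have := hf_mem i hiI
    simp only [piecewise_eq_of_mem _ _ _ hiI, mem_inter]
    exact ⟨this.2, fun h => absurd h.1 this.1.2⟩
  · simp only [piecewise_eq_of_notMem _ _ _ hiI, insert_initSeg_sub_one a (mem_Icc.1 hi).1,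
      implies_true, and_true]
    exact hM_down _ _ hA_M (initSeg_subset_image_Icc a (mem_Icc.1 hi).2)

/-- Exchange ordering of bases: given an enumeration of a basis `A`, any
basis `B` can be enumerated so that `A^{i−1} ∪ {b_i} ∈ 𝓜` for every `i`, and `b_i ∈ A ∩ B`
implies `b_i = a_i`. -/
theorem basis_exchange_ordering {α : Type*} [DecidableEq α]
    (N : Finset α) (M : Finset α → Prop)
    (hM_ground : ∀ S, M S → S ⊆ N) (hM_empty : M ∅)
    (hM_down : ∀ S T : Finset α, M T → S ⊆ T → M S)
    (hM_aug : ∀ S T : Finset α, M S → M T → S.card < T.card → ∃ x ∈ T \ S, M (insert x S))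
    (K : ℕ) (hK_le : ∀ S, M S → S.card ≤ K) (hK_ex : ∃ B, M B ∧ B.card = K)
    (A B : Finset α) (hA_M : M A) (hA_card : A.card = K)
    (hB_M : M B) (hB_card : B.card = K)
    (a : ℕ → α) (ha_inj : Set.InjOn a (Set.Icc 1 K))
    (ha_img : (Finset.Icc 1 K).image a = A) :
    ∃ b : ℕ → α, Set.InjOn b (Set.Icc 1 K) ∧ (Finset.Icc 1 K).image b = B ∧
      ∀ i ∈ Finset.Icc 1 K,
        M (insert (b i) (initSeg a (i - 1))) ∧ (b i ∈ A ∩ B → b i = a i) :=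
  basis_exchange_ordering_general M hM_down hM_aug K A B hA_M hB_M hB_card a ha_inj ha_img
end

section
/- Let (N, 𝓜) be a matroid of rank K, let A be a basis with enumeration (a_1, …, a_K), and let i ∈ {1, …, K}. If S ⊆ N ∖ A^{i−1} is the unique set with |S| = K − i + 1 and A^{i−1} ∪ S ∈ 𝓜 (necessarily S = A ∖ A^{i−1}), then S is contained in every basis of the matroid. -/
/-! If some `x ∈ S` were missing from a basis `B`, then augmenting
`A^{i−1} ∪ (S ∖ {x})` from `B` adds an element `y ≠ x`, and `S ∖ {x} ∪ {y}` would be a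
second completion of `A^{i−1}`, contradicting uniqueness. -/

open Finset

section Exchange

variable {α : Type*} [DecidableEq α] {M : Finset α → Prop}

theorem exists_insert_erase_of_card_le
    (hM_down : ∀ S T : Finset α, M T → S ⊆ T → M S)
    (hM_aug : ∀ S T : Finset α, M S → M T → S.card < T.card → ∃ x ∈ T \ S, M (insert x S))
    {I B : Finset α} {x : α} (hI : M I) (hB : M B) (hIB : I.card ≤ B.card) (hx : x ∈ I) :
    ∃ y ∈ B \ I.erase x, M (insert y (I.erase x)) :=
  hM_aug _ _ (hM_down _ _ hI (erase_subset x I)) hB ((card_erase_lt_of_mem hx).trans_le hIB)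

theorem subset_of_unique_completion {N C S B : Finset α}
    (hM_ground : ∀ S, M S → S ⊆ N)
    (hM_down : ∀ S T : Finset α, M T → S ⊆ T → M S)
    (hM_aug : ∀ S T : Finset α, M S → M T → S.card < T.card → ∃ x ∈ T \ S, M (insert x S))
    (hS_sub : S ⊆ N \ C) (hS_M : M (C ∪ S))
    (huniq : ∀ S' : Finset α, S' ⊆ N \ C → S'.card = S.card → M (C ∪ S') → S' = S)
    (hB : M B) (hcard : (C ∪ S).card ≤ B.card) : S ⊆ B := by
  intro x hxS
  by_contra hxB
  have hxC : x ∉ C := (mem_sdiff.mp (hS_sub hxS)).2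
  obtain ⟨y, hy, hyM⟩ :=
    exists_insert_erase_of_card_le hM_down hM_aug hS_M hB hcard (mem_union_right C hxS)
  obtain ⟨hyB, hy_erase⟩ := mem_sdiff.mp hy
  have hyx : y ≠ x := fun h => hxB (h ▸ hyB)
  have hyCS : y ∉ C ∪ S := fun h => hy_erase (mem_erase.mpr ⟨hyx, h⟩)
  have hswap : insert y ((C ∪ S).erase x) = C ∪ insert y (S.erase x) := by
    rw [erase_union_distrib, erase_eq_of_notMem hxC, union_insert]
  have hS' : insert y (S.erase x) = S := by
    refine huniq _ (insert_subset ?_ ((erase_subset x S).trans hS_sub)) ?_ (hswap ▸ hyM)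
    · exact mem_sdiff.mpr ⟨hM_ground B hB hyB, fun h => hyCS (mem_union_left S h)⟩
    · rw [card_insert_of_notMem fun h => hyCS (mem_union_right C (mem_of_mem_erase h)),
        card_erase_add_one hxS]
  exact hyCS (mem_union_right C (hS' ▸ mem_insert_self y _))

end Exchange

theorem unique_completion_subset_every_basis_general {α : Type*} [DecidableEq α]
    (N : Finset α) (M : Finset α → Prop)
    (hM_ground : ∀ S, M S → S ⊆ N)
    (hM_down : ∀ S T : Finset α, M T → S ⊆ T → M S)
    (hM_aug : ∀ S T : Finset α, M S → M T → S.card < T.card → ∃ x ∈ T \ S, M (insert x S))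
    (K : ℕ) (hK_le : ∀ S, M S → S.card ≤ K)
    (a : ℕ → α)
    (i : ℕ)
    (S : Finset α) (hS_sub : S ⊆ N \ initSeg a (i - 1))
    (hS_card : S.card = K - i + 1) (hS_M : M (initSeg a (i - 1) ∪ S))
    (huniq : ∀ S' : Finset α, S' ⊆ N \ initSeg a (i - 1) → S'.card = K - i + 1 →
      M (initSeg a (i - 1) ∪ S') → S' = S) :
    ∀ B : Finset α, M B → B.card = K → S ⊆ B := by
  intro B hB hB_card
  exact subset_of_unique_completion hM_ground hM_down hM_aug hS_sub hS_M
    (fun S' hS'_sub hS'_card => huniq S' hS'_sub (hS'_card.trans hS_card)) hB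
    (hB_card ▸ hK_le _ hS_M)

/-- If `S` is the unique subset of `N ∖ A^{i−1}` of cardinality
`K − i + 1` with `A^{i−1} ∪ S ∈ 𝓜`, then `S` is contained in every basis. -/
theorem unique_completion_subset_every_basis {α : Type*} [DecidableEq α]
    (N : Finset α) (M : Finset α → Prop)
    (hM_ground : ∀ S, M S → S ⊆ N) (hM_empty : M ∅)
    (hM_down : ∀ S T : Finset α, M T → S ⊆ T → M S)
    (hM_aug : ∀ S T : Finset α, M S → M T → S.card < T.card → ∃ x ∈ T \ S, M (insert x S))
    (K : ℕ) (hK_le : ∀ S, M S → S.card ≤ K) (hK_ex : ∃ B, M B ∧ B.card = K)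
    (A : Finset α) (hA_M : M A) (hA_card : A.card = K)
    (a : ℕ → α) (ha_inj : Set.InjOn a (Set.Icc 1 K))
    (ha_img : (Finset.Icc 1 K).image a = A)
    (i : ℕ) (hi : i ∈ Finset.Icc 1 K)
    (S : Finset α) (hS_sub : S ⊆ N \ initSeg a (i - 1))
    (hS_card : S.card = K - i + 1) (hS_M : M (initSeg a (i - 1) ∪ S))
    (huniq : ∀ S' : Finset α, S' ⊆ N \ initSeg a (i - 1) → S'.card = K - i + 1 →
      M (initSeg a (i - 1) ∪ S') → S' = S) :
    ∀ B : Finset α, M B → B.card = K → S ⊆ B :=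
  unique_completion_subset_every_basis_general N M hM_ground hM_down hM_aug K hK_le a i S hS_sub
    hS_card hS_M huniq
end

section
/- Let (N, 𝓜) be a matroid of rank K, let A be a basis with enumeration (a_1, …, a_K), and let i ∈ {1, …, K}. Then there exists a unique set S ⊆ N ∖ A^{i−1} with |S| = K − i + 1 and A^{i−1} ∪ S ∈ 𝓜 if and only if there exist exactly K − i + 1 elements x ∈ N ∖ A^{i−1} with A^{i−1} ∪ {x} ∈ 𝓜. -/
/-!
Every independent set extends, by repeated augmentation against a basis, to a basis. Hence
every extension `x` of `P = A^{i-1}` lies in some completion of `P` (a set `S` disjoint from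
`P` with `|S| = K - |P|` and `P ∪ S` independent), while every completion of `P` is contained
in the set `F` of all such extensions. So a unique completion must equal `F`, and conversely if
`|F| = K - |P|` then every completion, having that cardinality, is `F`.
-/

open Finset

theorem exists_superset_card_ge {α : Type*} [DecidableEq α] {M : Finset α → Prop}
    (hM_aug : ∀ S T : Finset α, M S → M T → S.card < T.card → ∃ x ∈ T \ S, M (insert x S))
    {B : Finset α} (hB : M B) (S : Finset α) (hS : M S) :
    ∃ T, S ⊆ T ∧ M T ∧ B.card ≤ T.card := by
  by_cases hle : B.card ≤ S.card
  · exact ⟨S, subset_rfl, hS, hle⟩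
  obtain ⟨x, hx, hxS⟩ := hM_aug S B hS hB (not_le.mp hle)
  have : B.card - (insert x S).card < B.card - S.card := by
    rw [card_insert_of_notMem (mem_sdiff.mp hx).2]
    omega
  obtain ⟨T, hST, hT, hcard⟩ := exists_superset_card_ge hM_aug hB (insert x S) hxS
  exact ⟨T, (subset_insert x S).trans hST, hT, hcard⟩
termination_by B.card - S.card

theorem exists_completion_superset {α : Type*} [DecidableEq α] {N : Finset α}
    {M : Finset α → Prop} (hM_ground : ∀ S, M S → S ⊆ N)
    (hM_aug : ∀ S T : Finset α, M S → M T → S.card < T.card → ∃ x ∈ T \ S, M (insert x S))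
    {K : ℕ} (hK_le : ∀ S, M S → S.card ≤ K) {B : Finset α} (hB : M B) (hB_card : B.card = K)
    {P Q : Finset α} (hQ : M Q) (hPQ : P ⊆ Q) :
    ∃ S, Q \ P ⊆ S ∧ S ⊆ N \ P ∧ S.card = K - P.card ∧ M (P ∪ S) := by
  obtain ⟨T, hQT, hT, hcard⟩ := exists_superset_card_ge hM_aug hB Q hQ
  have hT_card : T.card = K := le_antisymm (hK_le T hT) (hB_card ▸ hcard)
  have hPT : P ⊆ T := hPQ.trans hQT
  refine ⟨T \ P, sdiff_subset_sdiff hQT subset_rfl,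
    sdiff_subset_sdiff (hM_ground T hT) subset_rfl, ?_, ?_⟩
  · rw [card_sdiff_of_subset hPT, hT_card]
  · rwa [union_sdiff_of_subset hPT]

theorem subset_filter_insert_of_union {α : Type*} [DecidableEq α] {M : Finset α → Prop}
    [DecidablePred M] (hM_down : ∀ S T : Finset α, M T → S ⊆ T → M S)
    {N P S : Finset α} (hSN : S ⊆ N \ P) (hS : M (P ∪ S)) :
    S ⊆ (N \ P).filter fun x => M (insert x P) := fun _ hx =>
  mem_filter.mpr ⟨hSN hx, hM_down _ _ hS (insert_subset (mem_union_right P hx) subset_union_left)⟩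

theorem existsUnique_completion_iff_card_filter {α : Type*} [DecidableEq α] {N : Finset α}
    {M : Finset α → Prop} [DecidablePred M] (hM_ground : ∀ S, M S → S ⊆ N)
    (hM_down : ∀ S T : Finset α, M T → S ⊆ T → M S)
    (hM_aug : ∀ S T : Finset α, M S → M T → S.card < T.card → ∃ x ∈ T \ S, M (insert x S))
    {K : ℕ} (hK_le : ∀ S, M S → S.card ≤ K) {B : Finset α} (hB : M B) (hB_card : B.card = K)
    {P : Finset α} (hP : M P) :
    (∃! S, S ⊆ N \ P ∧ S.card = K - P.card ∧ M (P ∪ S)) ↔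
      ((N \ P).filter fun x => M (insert x P)).card = K - P.card := by
  set F := (N \ P).filter fun x => M (insert x P)
  have completion_superset {Q : Finset α} (hQ : M Q) (hPQ : P ⊆ Q) :=
    exists_completion_superset hM_ground hM_aug hK_le hB hB_card hQ hPQ
  constructor
  · rintro ⟨S, ⟨hSN, hS_card, hS⟩, huniq⟩
    suffices hFS : F ⊆ S by
      rw [← hS_card, Subset.antisymm hFS (subset_filter_insert_of_union hM_down hSN hS)]
    intro x hxF
    obtain ⟨hxN, hx⟩ := mem_filter.mp hxF
    obtain ⟨S', hxS', hS'⟩ := completion_superset hx (subset_insert x P)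
    rw [← huniq S' hS']
    exact hxS' (mem_sdiff.mpr ⟨mem_insert_self x P, (mem_sdiff.mp hxN).2⟩)
  · intro hF_card
    obtain ⟨S, -, hS⟩ := completion_superset hP subset_rfl
    have eq_F : ∀ S', S' ⊆ N \ P ∧ S'.card = K - P.card ∧ M (P ∪ S') → S' = F :=
      fun S' ⟨hS'N, hS'_card, hS'⟩ =>
        eq_of_subset_of_card_le (subset_filter_insert_of_union hM_down hS'N hS')
          (by rw [hF_card, hS'_card])
    exact ⟨S, hS, fun S' hS' => (eq_F S' hS').trans (eq_F S hS).symm⟩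

theorem initSeg_mono {α : Type*} [DecidableEq α] (a : ℕ → α) {j k : ℕ} (hjk : j ≤ k) :
    initSeg a j ⊆ initSeg a k :=
  image_subset_image (Icc_subset_Icc_right hjk)

theorem card_initSeg {α : Type*} [DecidableEq α] {a : ℕ → α} {j : ℕ}
    (ha : Set.InjOn a (Set.Icc 1 j)) : (initSeg a j).card = j := by
  rw [initSeg, card_image_of_injOn (by simpa using ha), Nat.card_Icc, Nat.add_sub_cancel]

theorem unique_completion_iff_count_extensions_general {α : Type*} [DecidableEq α]
    (N : Finset α) (M : Finset α → Prop)
    (hM_ground : ∀ S, M S → S ⊆ N)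
    (hM_down : ∀ S T : Finset α, M T → S ⊆ T → M S)
    (hM_aug : ∀ S T : Finset α, M S → M T → S.card < T.card → ∃ x ∈ T \ S, M (insert x S))
    [DecidablePred M]
    (K : ℕ) (hK_le : ∀ S, M S → S.card ≤ K)
    (A : Finset α) (hA_M : M A) (hA_card : A.card = K)
    (a : ℕ → α) (ha_inj : Set.InjOn a (Set.Icc 1 K))
    (ha_img : (Finset.Icc 1 K).image a = A)
    (i : ℕ) (hi : i ∈ Finset.Icc 1 K) :
    (∃! S : Finset α, S ⊆ N \ initSeg a (i - 1) ∧ S.card = K - i + 1 ∧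
        M (initSeg a (i - 1) ∪ S)) ↔
      ((N \ initSeg a (i - 1)).filter
        fun x => M (insert x (initSeg a (i - 1)))).card = K - i + 1 := by
  obtain ⟨hi_pos, hi_le⟩ := mem_Icc.mp hi
  have hP_card : (initSeg a (i - 1)).card = i - 1 :=
    card_initSeg (ha_inj.mono (Set.Icc_subset_Icc_right (by omega)))
  have hP : M (initSeg a (i - 1)) :=
    hM_down _ A hA_M (ha_img ▸ initSeg_mono a (by omega))
  have hr : K - (initSeg a (i - 1)).card = K - i + 1 := by omega
  rw [← hr]
  exact existsUnique_completion_iff_card_filter hM_ground hM_down hM_aug hK_le hA_M hA_card hP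

/-- There is a unique `S ⊆ N ∖ A^{i−1}` with `|S| = K − i + 1` and
`A^{i−1} ∪ S ∈ 𝓜` iff there are exactly `K − i + 1` elements `x ∈ N ∖ A^{i−1}` with
`A^{i−1} ∪ {x} ∈ 𝓜`. -/
theorem unique_completion_iff_count_extensions {α : Type*} [DecidableEq α]
    (N : Finset α) (M : Finset α → Prop)
    (hM_ground : ∀ S, M S → S ⊆ N) (hM_empty : M ∅)
    (hM_down : ∀ S T : Finset α, M T → S ⊆ T → M S)
    (hM_aug : ∀ S T : Finset α, M S → M T → S.card < T.card → ∃ x ∈ T \ S, M (insert x S))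
    [DecidablePred M]
    (K : ℕ) (hK_le : ∀ S, M S → S.card ≤ K) (hK_ex : ∃ B, M B ∧ B.card = K)
    (A : Finset α) (hA_M : M A) (hA_card : A.card = K)
    (a : ℕ → α) (ha_inj : Set.InjOn a (Set.Icc 1 K))
    (ha_img : (Finset.Icc 1 K).image a = A)
    (i : ℕ) (hi : i ∈ Finset.Icc 1 K) :
    (∃! S : Finset α, S ⊆ N \ initSeg a (i - 1) ∧ S.card = K - i + 1 ∧
        M (initSeg a (i - 1) ∪ S)) ↔
      ((N \ initSeg a (i - 1)).filter
        fun x => M (insert x (initSeg a (i - 1)))).card = K - i + 1 :=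
  unique_completion_iff_count_extensions_general N M hM_ground hM_down hM_aug K hK_le A hA_M hA_card
    a ha_inj ha_img i hi
end
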